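/- For integers m ≥ 1 and z ≠ 0, the recurrence (z∂_z + m)𝐃_m(z) = 𝐃_{m−1}(z) − 𝐅_m(z) holds. -/

import Mathlib

/-!
Write `𝐃_m = P_m - G_m` with `P_m = ∑_{k=1}^m c_k z^{-k}` and `G_m = ∑_k d_k z^k`. The operator
`z∂_z + m` multiplies a monomial `z^j` by `j + m`, so it acts coefficientwise. On `P_m`,
`(m - k)/(m - k)! = 1/(m - 1 - k)!` yields `P_{m-1}` (the term `k = m` dies). On `G_m`,
`ψ(k + m + 1) = ψ(k + m) + 1/(k + m)` splits `(k + m) d_k` into the coefficient of `G_{m-1}`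
plus `1/(k!(m + k)!)`, the coefficient of `𝐅_m`. Since `ψ(n + 1)` grows at most linearly, all
coefficients are `O(2^k/k!)`, which justifies differentiating `G_m` termwise.
-/

open Complex

/-- The digamma function `ψ = Γ'/Γ`. -/
noncomputable def digamma (z : ℂ) : ℂ := deriv Complex.Gamma z / Complex.Gamma z

/-- The normalized ₀F₁ function with integer parameter: `𝐅_m(z) = ∑ zⁿ/((m+n)!·n!)`. -/
noncomputable def Fm (m : ℕ) (z : ℂ) : ℂ :=
  ∑' n : ℕ, z ^ n / ((m + n).factorial * n.factorial)

/-- `𝐃_m(z) = ∑_{k=1}^m (−1)^{k−1}(k−1)!/(m−k)!·z^{−k}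
      − ∑_{k≥0} (ψ(k+1)+ψ(k+m+1))/(k!(m+k)!)·z^k`. -/
noncomputable def Dm (m : ℕ) (z : ℂ) : ℂ :=
  (∑ k ∈ Finset.Icc 1 m,
      (-1 : ℂ) ^ (k - 1) * (k - 1).factorial / (m - k).factorial * z ^ (-(k : ℤ)))
  - ∑' k : ℕ, (_root_.digamma (k + 1) + _root_.digamma (k + m + 1)) / (k.factorial * (m + k).factorial) * z ^ k

section PowerSeries

variable {𝕜 : Type*} [RCLike 𝕜] {a : ℕ → 𝕜}

lemma summable_norm_mul_pow_of_norm_le_two_pow_div_factorial {C : ℝ}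
    (h : ∀ k, ‖a k‖ ≤ C * 2 ^ k / k.factorial) (r : ℝ) :
    Summable fun k => ‖a k‖ * r ^ k := by
  refine .of_norm_bounded ((Real.summable_pow_div_factorial (2 * |r|)).mul_left C) fun k => ?_
  calc ‖‖a k‖ * r ^ k‖ = ‖a k‖ * |r| ^ k := by rw [norm_mul, norm_norm, Real.norm_eq_abs, abs_pow]
    _ ≤ C * 2 ^ k / k.factorial * |r| ^ k := by gcongr; exact h k
    _ = C * ((2 * |r|) ^ k / k.factorial) := by ring

lemma summable_mul_pow (ha : ∀ r : ℝ, Summable fun k => ‖a k‖ * r ^ k) (z : 𝕜) :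
    Summable fun k => a k * z ^ k :=
  .of_norm <| by simpa only [norm_mul, norm_pow] using ha ‖z‖

lemma norm_mul_natCast_mul_pow_pred_le {R : ℝ} (hR : 1 ≤ R) {w : 𝕜} (hw : ‖w‖ ≤ R) (c : 𝕜)
    (k : ℕ) : ‖c * (k * w ^ (k - 1))‖ ≤ ‖c‖ * (2 * R) ^ k := by
  rw [norm_mul, norm_mul, norm_pow, RCLike.norm_natCast, mul_pow]
  have hk : (k : ℝ) ≤ 2 ^ k := by exact_mod_cast Nat.lt_two_pow_self.le
  have hwk : ‖w‖ ^ (k - 1) ≤ R ^ k :=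
    (pow_le_pow_left₀ (norm_nonneg w) hw _).trans (pow_le_pow_right₀ hR (Nat.sub_le k 1))
  gcongr

lemma hasDerivAt_tsum_mul_pow (ha : ∀ r : ℝ, Summable fun k => ‖a k‖ * r ^ k) (z : 𝕜) :
    HasDerivAt (fun w => ∑' k, a k * w ^ k) (∑' k, a k * (k * z ^ (k - 1))) z := by
  have hR : 1 ≤ ‖z‖ + 1 := by linarith [norm_nonneg z]
  have hz : z ∈ Metric.ball 0 (‖z‖ + 1) := by simp
  refine hasDerivAt_tsum_of_isPreconnected (ha (2 * (‖z‖ + 1))) Metric.isOpen_ball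
    (convex_ball _ _).isPreconnected (fun k w _ => (hasDerivAt_pow k w).const_mul (a k))
    (fun k w hw => norm_mul_natCast_mul_pow_pred_le hR ?_ (a k) k) hz (summable_mul_pow ha z) hz
  simpa using (mem_ball_zero_iff.mp hw).le

lemma euler_tsum_mul_pow (ha : ∀ r : ℝ, Summable fun k => ‖a k‖ * r ^ k) (c z : 𝕜) :
    z * deriv (fun w => ∑' k, a k * w ^ k) z + c * ∑' k, a k * z ^ k
      = ∑' k, (k + c) * a k * z ^ k := by
  have hR : 1 ≤ ‖z‖ + 1 := by linarith [norm_nonneg z]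
  have hderiv : Summable fun k => a k * (k * z ^ (k - 1)) :=
    .of_norm_bounded (ha (2 * (‖z‖ + 1)))
      fun k => norm_mul_natCast_mul_pow_pred_le hR (by linarith) (a k) k
  rw [(hasDerivAt_tsum_mul_pow ha z).deriv, ← tsum_mul_left, ← tsum_mul_left,
    ← (hderiv.mul_left z).tsum_add ((summable_mul_pow ha z).mul_left c)]
  refine tsum_congr fun k => ?_
  rcases k with _ | k
  · simp
  · rw [Nat.add_sub_cancel, pow_succ]
    push_cast
    ring

end PowerSeries

section LaurentPolynomial

variable {𝕜 : Type*} [NontriviallyNormedField 𝕜] (s : Finset ℕ) (c : ℕ → 𝕜) {z : 𝕜}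

lemma hasDerivAt_sum_mul_zpow_neg (hz : z ≠ 0) :
    HasDerivAt (fun w => ∑ k ∈ s, c k * w ^ (-(k : ℤ)))
      (∑ k ∈ s, c k * (((-k : ℤ) : 𝕜) * z ^ (-(k : ℤ) - 1))) z :=
  .fun_sum fun k _ => (hasDerivAt_zpow _ z (.inl hz)).const_mul (c k)

lemma euler_sum_mul_zpow_neg (hz : z ≠ 0) (μ : 𝕜) :
    z * deriv (fun w => ∑ k ∈ s, c k * w ^ (-(k : ℤ))) z + μ * ∑ k ∈ s, c k * z ^ (-(k : ℤ))
      = ∑ k ∈ s, (μ - k) * c k * z ^ (-(k : ℤ)) := by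
  rw [(hasDerivAt_sum_mul_zpow_neg s c hz).deriv, Finset.mul_sum, Finset.mul_sum,
    ← Finset.sum_add_distrib]
  refine Finset.sum_congr rfl fun k _ => ?_
  rw [zpow_sub_one₀ hz]
  push_cast
  field_simp
  ring

end LaurentPolynomial

lemma Complex.digamma_natCast_add_one {n : ℕ} (hn : n ≠ 0) :
    Complex.digamma (n + 1) = Complex.digamma n + (n : ℂ)⁻¹ := by
  refine Complex.digamma_apply_add_one _ fun j h => hn ?_
  have : ((n + j : ℕ) : ℂ) = 0 := by push_cast; linear_combination h
  have := Nat.cast_eq_zero.mp this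
  omega

lemma Complex.norm_digamma_natCast_add_one_le (n : ℕ) :
    ‖Complex.digamma (n + 1)‖ ≤ ‖Complex.digamma 1‖ + n := by
  induction n with
  | zero => simp
  | succ n ih =>
    have hinv : ‖((n + 1 : ℕ) : ℂ)⁻¹‖ ≤ 1 := by
      rw [norm_inv, Complex.norm_natCast]
      exact inv_le_one_of_one_le₀ (by simp)
    calc ‖Complex.digamma ((n + 1 : ℕ) + 1)‖
        = ‖Complex.digamma ((n + 1 : ℕ)) + ((n + 1 : ℕ) : ℂ)⁻¹‖ := by
          rw [Complex.digamma_natCast_add_one n.succ_ne_zero]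
      _ ≤ (‖Complex.digamma 1‖ + n) + 1 := by
          refine (norm_add_le _ _).trans (add_le_add ?_ hinv)
          simpa using ih
      _ = ‖Complex.digamma 1‖ + (n + 1 : ℕ) := by push_cast; ring

noncomputable def dmPrincipalCoeff (m k : ℕ) : ℂ :=
  (-1) ^ (k - 1) * (k - 1).factorial / (m - k).factorial

noncomputable def dmSeriesCoeff (m k : ℕ) : ℂ :=
  (Complex.digamma (k + 1) + Complex.digamma (k + m + 1)) / (k.factorial * (m + k).factorial)

noncomputable def dmPrincipal (m : ℕ) (z : ℂ) : ℂ :=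
  ∑ k ∈ Finset.Icc 1 m, dmPrincipalCoeff m k * z ^ (-(k : ℤ))

noncomputable def dmSeries (m : ℕ) (z : ℂ) : ℂ :=
  ∑' k, dmSeriesCoeff m k * z ^ k

-- `rfl`: the `digamma` of the statement unfolds to `Complex.digamma = logDeriv Gamma`.
lemma Dm_eq_dmPrincipal_sub_dmSeries (m : ℕ) :
    Dm m = fun z => dmPrincipal m z - dmSeries m z :=
  rfl

lemma dmPrincipalCoeff_succ {m k : ℕ} (hk : k ≤ m) :
    (((m + 1 : ℕ) : ℂ) - k) * dmPrincipalCoeff (m + 1) k = dmPrincipalCoeff m k := by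
  obtain ⟨j, rfl⟩ : ∃ j, m = j + k := ⟨m - k, by omega⟩
  rw [dmPrincipalCoeff, dmPrincipalCoeff, show j + k + 1 - k = j + 1 by omega,
    Nat.add_sub_cancel, Nat.factorial_succ]
  push_cast
  field_simp
  ring

lemma dmSeriesCoeff_succ (m k : ℕ) :
    (k + ((m + 1 : ℕ) : ℂ)) * dmSeriesCoeff (m + 1) k
      = dmSeriesCoeff m k + (((m + 1 + k).factorial : ℂ) * k.factorial)⁻¹ := by
  have hψ := Complex.digamma_natCast_add_one (n := k + m + 1) (by omega)
  have hn : (k : ℂ) + m + 1 ≠ 0 := by exact_mod_cast (k + m).succ_ne_zero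
  have hk : (k.factorial : ℂ) ≠ 0 := by exact_mod_cast k.factorial_ne_zero
  have hmk : ((m + k).factorial : ℂ) ≠ 0 := by exact_mod_cast (m + k).factorial_ne_zero
  have hfac : ((m + 1 + k).factorial : ℂ) = (k + m + 1) * (m + k).factorial := by
    rw [show m + 1 + k = (m + k) + 1 by omega, Nat.factorial_succ]
    push_cast
    ring
  push_cast at hψ
  rw [dmSeriesCoeff, dmSeriesCoeff, hfac, Nat.cast_succ,
    show (k : ℂ) + (m + 1) + 1 = k + m + 1 + 1 by ring, hψ]
  field_simp
  ring

lemma norm_dmSeriesCoeff_le (m k : ℕ) :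
    ‖dmSeriesCoeff m k‖ ≤ (2 * ‖Complex.digamma 1‖ + m + 2) * 2 ^ k / k.factorial := by
  have hψ₁ := Complex.norm_digamma_natCast_add_one_le k
  have hψ₂ := Complex.norm_digamma_natCast_add_one_le (k + m)
  push_cast at hψ₂
  have hk : (k : ℝ) ≤ 2 ^ k := by exact_mod_cast Nat.lt_two_pow_self.le
  have h1 : (1 : ℝ) ≤ 2 ^ k := one_le_pow₀ (by norm_num)
  have hnum : ‖Complex.digamma (k + 1) + Complex.digamma (k + m + 1)‖
      ≤ (2 * ‖Complex.digamma 1‖ + m + 2) * 2 ^ k := by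
    refine (norm_add_le _ _).trans ?_
    nlinarith [norm_nonneg (Complex.digamma 1), (m.cast_nonneg : (0 : ℝ) ≤ m)]
  rw [dmSeriesCoeff, norm_div, norm_mul, Complex.norm_natCast, Complex.norm_natCast]
  calc _ ≤ (2 * ‖Complex.digamma 1‖ + m + 2) * 2 ^ k / (k.factorial * 1) := by
        gcongr
        exact_mod_cast (m + k).factorial_pos
    _ = _ := by rw [mul_one]

lemma summable_norm_dmSeriesCoeff_mul_pow (m : ℕ) (r : ℝ) :
    Summable fun k => ‖dmSeriesCoeff m k‖ * r ^ k :=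
  summable_norm_mul_pow_of_norm_le_two_pow_div_factorial (norm_dmSeriesCoeff_le m) r

lemma norm_inv_factorial_mul_factorial_le (m k : ℕ) :
    ‖(((m + k).factorial : ℂ) * k.factorial)⁻¹‖ ≤ 1 * 2 ^ k / k.factorial := by
  rw [norm_inv, norm_mul, Complex.norm_natCast, Complex.norm_natCast, one_mul]
  calc ((m + k).factorial * k.factorial : ℝ)⁻¹ ≤ (1 * k.factorial : ℝ)⁻¹ := by
        gcongr
        exact_mod_cast (m + k).factorial_pos
    _ ≤ 2 ^ k / k.factorial := by
        rw [one_mul, inv_eq_one_div]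
        gcongr
        exact one_le_pow₀ (by norm_num)

lemma dmPrincipal_euler (m : ℕ) {z : ℂ} (hz : z ≠ 0) :
    z * deriv (dmPrincipal (m + 1)) z + ((m + 1 : ℕ) : ℂ) * dmPrincipal (m + 1) z
      = dmPrincipal m z := by
  unfold dmPrincipal
  rw [euler_sum_mul_zpow_neg _ _ hz, Finset.sum_Icc_succ_top (by omega), sub_self, zero_mul,
    zero_mul, add_zero]
  exact Finset.sum_congr rfl fun k hk => by rw [dmPrincipalCoeff_succ (Finset.mem_Icc.mp hk).2]

lemma dmSeries_euler (m : ℕ) (z : ℂ) :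
    z * deriv (dmSeries (m + 1)) z + ((m + 1 : ℕ) : ℂ) * dmSeries (m + 1) z
      = dmSeries m z + Fm (m + 1) z := by
  have hF := summable_norm_mul_pow_of_norm_le_two_pow_div_factorial
    (norm_inv_factorial_mul_factorial_le (m + 1))
  unfold dmSeries
  rw [euler_tsum_mul_pow (summable_norm_dmSeriesCoeff_mul_pow (m + 1)), Fm,
    ← (summable_mul_pow (summable_norm_dmSeriesCoeff_mul_pow m) z).tsum_add]
  · refine tsum_congr fun k => ?_
    rw [dmSeriesCoeff_succ, div_eq_inv_mul]
    ring
  · simpa only [div_eq_inv_mul] using summable_mul_pow hF z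

theorem Dm_lowering_recurrence (m : ℕ) (hm : 1 ≤ m) (z : ℂ) (hz : z ≠ 0) :
    z * deriv (Dm m) z + m * Dm m z = Dm (m - 1) z - Fm m z := by
  obtain ⟨m, rfl⟩ : ∃ m', m = m' + 1 := ⟨m - 1, by omega⟩
  have hP : DifferentiableAt ℂ (dmPrincipal (m + 1)) z :=
    (hasDerivAt_sum_mul_zpow_neg _ _ hz).differentiableAt
  have hG : DifferentiableAt ℂ (dmSeries (m + 1)) z :=
    (hasDerivAt_tsum_mul_pow (summable_norm_dmSeriesCoeff_mul_pow (m + 1)) z).differentiableAt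
  simp only [Nat.add_sub_cancel, Dm_eq_dmPrincipal_sub_dmSeries]
  rw [deriv_fun_sub hP hG]
  linear_combination dmPrincipal_euler m hz - dmSeries_euler m z
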